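/- arXiv:math/9906178 — 4 statements merged into one kernel-verified Lean document; each statement's English description precedes it below -/
import Mathlib

section
/- Let K be a locally compact subset of ℝⁿ and f : K → ℝⁿ a continuous map. The following are equivalent: (i) for every x ∈ K, f(x) ∈ T_K(x); (ii) for every x ∈ K, f(x) belongs to the closed convex hull of T_K(x); (iii) for every x ∈ K and every p ∈ N_K(x), ⟨p, f(x)⟩ ≤ 0. -/
open Filter Set Metric Topology
open scoped ENNReal NNReal

noncomputable section

/-- The contingent (Bouligand) cone to `S` at `x`:
`T_S(x) = {v : liminf_{h→0+} dist(x + h·v, S)/h = 0}`. -/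
def contCone {E : Type*} [NormedAddCommGroup E] [NormedSpace ℝ E] (S : Set E) (x : E) : Set E :=
  {v | Filter.liminf (fun h : ℝ => ENNReal.ofReal (Metric.infDist (x + h • v) S / h))
      (nhdsWithin (0:ℝ) (Set.Ioi 0)) = 0}

/-- The normal cone to `S` at `x`: the polar cone of the contingent cone. -/
def normCone {E : Type*} [NormedAddCommGroup E] [InnerProductSpace ℝ E] (S : Set E) (x : E) :
    Set E :=
  {p | ∀ v ∈ contCone S x, (inner ℝ p v : ℝ) ≤ 0}

/-! The hard implication is (iii) ⇒ (i). Fix `x₀ ∈ K`, put `v = f x₀` and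
`g t = dist (x₀ + t • v, K)`. For small `t`, local compactness gives a nearest point `z ∈ K`
to `x₀ + t • v`, close to `x₀`; the proximal normal `x₀ + t • v - z` lies in `N_K(z)`, so
(iii) at `z` and continuity of `f` give `⟪x₀ + t • v - z, v⟫ ≤ ε g t`. Moving from
`x₀ + t • v` to `x₀ + (t + s) • v` while measuring the distance to the same `z` yields
`g (t + s)² ≤ g t² + 2 s ε g t + s² ‖v‖²`, and a fencing argument for this differential
inequality gives `g t ≤ ε t` near `0`, i.e. `v ∈ T_K(x₀)`. -/

open scoped RealInnerProductSpace

section ContingentCone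

variable {E : Type*} [NormedAddCommGroup E] [NormedSpace ℝ E] {S : Set E} {x v : E}

theorem mem_contCone_of_forall_eventually_infDist_le
    (h : ∀ ε > 0, ∀ᶠ t in 𝓝[>] (0 : ℝ), infDist (x + t • v) S ≤ ε * t) :
    v ∈ contCone S x := by
  have hquot : Tendsto (fun t : ℝ => infDist (x + t • v) S / t) (𝓝[>] 0) (𝓝 0) := by
    refine tendsto_order.2 ⟨fun a ha => ?_, fun a ha => ?_⟩
    · filter_upwards [self_mem_nhdsWithin] with t (ht : 0 < t)
      exact ha.trans_le (div_nonneg infDist_nonneg ht.le)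
    · filter_upwards [h (a / 2) (half_pos ha), self_mem_nhdsWithin] with t hle (ht : 0 < t)
      rw [div_lt_iff₀ ht]
      linarith [mul_pos ha ht]
  change liminf _ _ = 0
  rw [(ENNReal.tendsto_ofReal hquot).liminf_eq, ENNReal.ofReal_zero]

theorem frequently_infDist_lt_of_mem_contCone (hv : v ∈ contCone S x) {ε : ℝ} (hε : 0 < ε) :
    ∃ᶠ t in 𝓝[>] (0 : ℝ), infDist (x + t • v) S < ε * t := by
  have hlt : liminf (fun t : ℝ => ENNReal.ofReal (infDist (x + t • v) S / t)) (𝓝[>] 0) <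
      ENNReal.ofReal ε := by
    rw [hv]
    exact ENNReal.ofReal_pos.2 hε
  refine ((frequently_lt_of_liminf_lt (by isBoundedDefault) hlt).and_eventually
    self_mem_nhdsWithin).mono fun t ⟨hq, (ht : 0 < t)⟩ => ?_
  rwa [ENNReal.ofReal_lt_ofReal_iff hε, div_lt_iff₀ ht] at hq

end ContingentCone

theorem exists_infDist_eq_dist_of_isCompact_inter_closedBall {α : Type*} [MetricSpace α]
    {S : Set α} {x₀ y : α} {r : ℝ} (hx₀ : x₀ ∈ S) (hS : IsCompact (S ∩ closedBall x₀ r))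
    (hy : 2 * dist y x₀ ≤ r) : ∃ z ∈ S, infDist y S = dist y z := by
  have hball : closedBall y (dist x₀ y) ⊆ closedBall x₀ r :=
    closedBall_subset_closedBall' (by rw [dist_comm x₀ y]; linarith)
  have hcompact : IsCompact (S ∩ closedBall y (dist x₀ y)) := by
    rw [← inter_eq_right.2 hball, ← inter_assoc]
    exact hS.inter_right isClosed_closedBall
  obtain ⟨z, hz, hyz⟩ :=
    hcompact.exists_infDist_eq_dist ⟨x₀, hx₀, mem_closedBall.2 le_rfl⟩ y
  exact ⟨z, hz.1, (infDist_inter_closedBall_of_mem hx₀).symm.trans hyz⟩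

section ProximalNormal

variable {E : Type*} [NormedAddCommGroup E] [InnerProductSpace ℝ E] {S : Set E} {y z : E}

theorem sub_mem_normCone_of_infDist_eq_dist (hz : z ∈ S) (hyz : infDist y S = dist y z) :
    y - z ∈ normCone S z := by
  intro v hv
  set p := y - z
  have hnearest : ∀ w ∈ S, 2 * ⟪p, w - z⟫ ≤ ‖w - z‖ ^ 2 := by
    intro w hw
    have hle : ‖p‖ ≤ ‖p - (w - z)‖ := by
      simpa only [p, sub_sub_sub_cancel_right, ← dist_eq_norm, ← hyz]
        using infDist_le_dist_of_mem hw
    have hsq : ‖p‖ ^ 2 ≤ ‖p - (w - z)‖ ^ 2 := by gcongr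
    linarith [norm_sub_sq_real p (w - z)]
  -- Compare `z` with points `w ∈ S` within `η t` of `z + t • v`, for small `0 < t ≤ η`.
  have hsmall : ∀ η ∈ Ioc (0 : ℝ) 1, ⟪p, v⟫ ≤ η * (‖p‖ + (‖v‖ + 1) ^ 2 / 2) := by
    rintro η ⟨hη, hη1⟩
    obtain ⟨t, hdist, ht, htη⟩ := ((frequently_infDist_lt_of_mem_contCone hv hη).and_eventually
      (Ioc_mem_nhdsGT hη)).exists
    obtain ⟨w, hw, hzw⟩ := (infDist_lt_iff ⟨z, hz⟩).1 hdist
    set e := w - (z + t • v)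
    have he : ‖e‖ < η * t := by rwa [dist_comm, dist_eq_norm] at hzw
    have hwz : w - z = t • v + e := by simp only [e]; abel
    have hlower : t * ⟪p, v⟫ - ‖p‖ * (η * t) ≤ ⟪p, w - z⟫ := by
      rw [hwz, inner_add_right, real_inner_smul_right]
      nlinarith [neg_abs_le ⟪p, e⟫, abs_real_inner_le_norm p e, norm_nonneg p]
    have hupper : ‖w - z‖ ≤ t * (‖v‖ + 1) := by
      rw [hwz]
      calc ‖t • v + e‖ ≤ t * ‖v‖ + η * t := by
            refine (norm_add_le _ _).trans ?_
            rw [norm_smul, Real.norm_eq_abs, abs_of_pos ht]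
            linarith
        _ ≤ t * (‖v‖ + 1) := by nlinarith
    have hsq : ‖w - z‖ ^ 2 ≤ t * (t * (‖v‖ + 1) ^ 2) := by
      nlinarith [norm_nonneg (w - z)]
    have hdiv : 2 * ⟪p, v⟫ ≤ 2 * ‖p‖ * η + t * (‖v‖ + 1) ^ 2 :=
      le_of_mul_le_mul_left (by nlinarith [hnearest w hw]) ht
    have : t * (‖v‖ + 1) ^ 2 ≤ η * (‖v‖ + 1) ^ 2 := by gcongr
    linarith
  have hlim : Tendsto (fun η : ℝ => η * (‖p‖ + (‖v‖ + 1) ^ 2 / 2)) (𝓝[>] 0) (𝓝 0) :=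
    ((continuous_mul_const _).tendsto' 0 0 (zero_mul _)).mono_left nhdsWithin_le_nhds
  exact ge_of_tendsto hlim (eventually_of_mem (Ioc_mem_nhdsGT one_pos) hsmall)

theorem infDist_add_smul_sq_le (hz : z ∈ S) (hyz : infDist y S = dist y z) (v : E) (s : ℝ) :
    infDist (y + s • v) S ^ 2 ≤ infDist y S ^ 2 + 2 * s * ⟪y - z, v⟫ + s ^ 2 * ‖v‖ ^ 2 := by
  have hle : infDist (y + s • v) S ≤ ‖(y - z) + s • v‖ := by
    rw [sub_add_eq_add_sub, ← dist_eq_norm]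
    exact infDist_le_dist_of_mem hz
  calc infDist (y + s • v) S ^ 2 ≤ ‖(y - z) + s • v‖ ^ 2 := by gcongr; exact infDist_nonneg
    _ = infDist y S ^ 2 + 2 * s * ⟪y - z, v⟫ + s ^ 2 * ‖v‖ ^ 2 := by
      rw [norm_add_sq_real, real_inner_smul_right, norm_smul, mul_pow, Real.norm_eq_abs, sq_abs,
        hyz, dist_eq_norm]
      ring

theorem infDist_add_smul_sq_le_of_inner_normCone_le {u v : E} {ε s : ℝ} (hz : z ∈ S)
    (hyz : infDist y S = dist y z) (hu : ∀ p ∈ normCone S z, ⟪p, u⟫ ≤ 0) (huv : dist u v ≤ ε)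
    (hs : 0 ≤ s) :
    infDist (y + s • v) S ^ 2 ≤ infDist y S ^ 2 + 2 * s * ε * infDist y S + s ^ 2 * ‖v‖ ^ 2 := by
  have hinner : ⟪y - z, v⟫ ≤ ε * infDist y S :=
    calc ⟪y - z, v⟫ = ⟪y - z, u⟫ + ⟪y - z, v - u⟫ := by rw [inner_sub_right]; ring
      _ ≤ 0 + ‖y - z‖ * ‖v - u‖ :=
        add_le_add (hu _ (sub_mem_normCone_of_infDist_eq_dist hz hyz)) (real_inner_le_norm _ _)
      _ ≤ ε * infDist y S := by
        rw [zero_add, ← dist_eq_norm, ← dist_eq_norm, dist_comm v, ← hyz, mul_comm]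
        exact mul_le_mul_of_nonneg_right huv infDist_nonneg
  have := mul_le_mul_of_nonneg_left hinner (by positivity : (0 : ℝ) ≤ 2 * s)
  linarith [infDist_add_smul_sq_le hz hyz v s]

end ProximalNormal

/-- Fencing for `φ ^ 2` against `((η + c) t + c) ^ 2`, with `c → 0+`. -/
theorem le_mul_of_sq_le_sq_add {φ : ℝ → ℝ} {η M T : ℝ} (hη : 0 ≤ η)
    (hφ : ContinuousOn φ (Icc 0 T)) (hφ0 : φ 0 = 0)
    (hstep : ∀ t ∈ Ico 0 T, ∀ s > 0, φ (t + s) ^ 2 ≤ φ t ^ 2 + 2 * s * η * φ t + s ^ 2 * M) :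
    ∀ t ∈ Icc 0 T, φ t ≤ η * t := by
  intro t ht
  have hslope : ∀ x ∈ Ico 0 T, ∀ r, 2 * η * φ x < r →
      ∃ᶠ z in 𝓝[>] x, slope (fun t => φ t ^ 2) x z < r := by
    intro x hx r hr
    have hsmall : ∀ᶠ z in 𝓝[>] x, (z - x) * M < r - 2 * η * φ x := by
      refine Tendsto.eventually_lt_const (sub_pos.2 hr) ?_
      have : Continuous fun z : ℝ => (z - x) * M := by fun_prop
      exact (this.tendsto' x 0 (by simp)).mono_left nhdsWithin_le_nhds
    refine (hsmall.and self_mem_nhdsWithin).frequently.mono fun z ⟨hz, (hxz : x < z)⟩ => ?_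
    have := hstep x hx (z - x) (sub_pos.2 hxz)
    rw [add_sub_cancel] at this
    rw [slope_def_field, div_lt_iff₀ (sub_pos.2 hxz)]
    nlinarith [sub_pos.2 hxz]
  have hfence : ∀ c > 0, φ t ≤ η * t + c * (t + 1) := by
    intro c hc
    have hB : ∀ x, HasDerivAt (fun t => ((η + c) * t + c) ^ 2)
        (2 * ((η + c) * x + c) * (η + c)) x := fun x => by
      simpa using (((hasDerivAt_id' x).const_mul (η + c)).add_const c).fun_pow 2
    have hsq := image_le_of_liminf_slope_right_lt_deriv_boundary (hφ.pow 2) hslope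
      (by simpa [hφ0] using sq_nonneg c) hB (fun x hx hcontact => ?_) ht
    · have := (abs_le_of_sq_le_sq' hsq (by nlinarith [ht.1])).2
      linarith
    have hpos : 0 < (η + c) * x + c := by nlinarith [hx.1]
    have hφx : φ x ≤ (η + c) * x + c := (abs_le_of_sq_le_sq' hcontact.le hpos.le).2
    nlinarith
  have hlim : Tendsto (fun c : ℝ => η * t + c * (t + 1)) (𝓝[>] 0) (𝓝 (η * t)) := by
    have : Continuous fun c : ℝ => η * t + c * (t + 1) := by fun_prop
    exact (this.tendsto' 0 _ (by simp)).mono_left nhdsWithin_le_nhds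
  exact ge_of_tendsto hlim (eventually_of_mem self_mem_nhdsWithin hfence)

section Viability

variable {E : Type*} [NormedAddCommGroup E] [InnerProductSpace ℝ E] {K : Set E} {f : E → E}

theorem inner_le_zero_of_mem_closure_convexHull {x p v : E} (hp : p ∈ normCone K x)
    (hv : v ∈ closure (convexHull ℝ (contCone K x))) : ⟪p, v⟫ ≤ 0 := by
  have hconvex : Convex ℝ {w : E | ⟪p, w⟫ ≤ 0} :=
    convex_halfSpace_le ⟨fun a b => inner_add_right _ _ _, fun c w => real_inner_smul_right _ _ _⟩ 0
  have hclosed : IsClosed {w : E | ⟪p, w⟫ ≤ 0} := isClosed_le (by fun_prop) continuous_const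
  exact hclosed.closure_subset_iff.2 (convexHull_min hp hconvex) hv

theorem mem_contCone_of_forall_inner_normCone_le_zero {x₀ : E} {r : ℝ} (hx₀ : x₀ ∈ K)
    (hr : 0 < r) (hK : IsCompact (K ∩ closedBall x₀ r)) (hf : ContinuousWithinAt f K x₀)
    (h : ∀ x ∈ K, ∀ p ∈ normCone K x, ⟪p, f x⟫ ≤ 0) : f x₀ ∈ contCone K x₀ := by
  refine mem_contCone_of_forall_eventually_infDist_le fun ε hε => ?_
  set v := f x₀
  set g : ℝ → ℝ := fun t => infDist (x₀ + t • v) K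
  obtain ⟨δ, hδ, hfδ⟩ := Metric.continuousWithinAt_iff.1 hf ε hε
  set T := min r δ / (2 * (‖v‖ + 1))
  have hT : 0 < T := by positivity
  have hnearest : ∀ t ∈ Ico 0 T,
      ∃ z ∈ K, infDist (x₀ + t • v) K = dist (x₀ + t • v) z ∧ dist z x₀ < δ := by
    intro t ht
    have hdist : dist (x₀ + t • v) x₀ = t * ‖v‖ := by
      rw [dist_eq_norm, add_sub_cancel_left, norm_smul, Real.norm_eq_abs, abs_of_nonneg ht.1]
    have hsmall : 2 * (t * ‖v‖) < min r δ := by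
      have := (lt_div_iff₀ (by positivity)).1 ht.2
      nlinarith [ht.1]
    obtain ⟨z, hz, hyz⟩ := exists_infDist_eq_dist_of_isCompact_inter_closedBall hx₀ hK
      (by rw [hdist]; linarith [min_le_left r δ])
    refine ⟨z, hz, hyz, ?_⟩
    calc dist z x₀ ≤ dist (x₀ + t • v) z + dist (x₀ + t • v) x₀ := dist_triangle_left _ _ _
      _ ≤ 2 * dist (x₀ + t • v) x₀ := by
        linarith [hyz ▸ infDist_le_dist_of_mem (x := x₀ + t • v) hx₀]
      _ < δ := by rw [hdist]; linarith [min_le_right r δ]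
  have hstep : ∀ t ∈ Ico 0 T, ∀ s > 0,
      g (t + s) ^ 2 ≤ g t ^ 2 + 2 * s * ε * g t + s ^ 2 * ‖v‖ ^ 2 := by
    intro t ht s hs
    obtain ⟨z, hz, hyz, hzx⟩ := hnearest t ht
    have hshift : g (t + s) = infDist (x₀ + t • v + s • v) K := by
      simp only [g, add_smul, add_assoc]
    rw [hshift]
    exact infDist_add_smul_sq_le_of_inner_normCone_le hz hyz (h z hz) (hfδ hz hzx).le hs.le
  have hg : ContinuousOn g (Icc 0 T) :=
    ((continuous_infDist_pt K).comp (by fun_prop)).continuousOn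
  have hlinear := le_mul_of_sq_le_sq_add hε.le hg (by simp [g, infDist_zero_of_mem hx₀]) hstep
  filter_upwards [Ioc_mem_nhdsGT hT] with t ht using hlinear t ⟨ht.1.le, ht.2⟩

end Viability

/-- Let `K ⊆ ℝⁿ` be locally compact and `f : K → ℝⁿ` continuous. The following are
equivalent: (i) `f(x) ∈ T_K(x)` on `K`; (ii) `f(x)` lies in the closed convex hull of
`T_K(x)` on `K`; (iii) `⟨p, f(x)⟩ ≤ 0` for all `x ∈ K`, `p ∈ N_K(x)`. -/
theorem viability_domain_equivalences {n : ℕ} (K : Set (EuclideanSpace ℝ (Fin n)))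
    (f : EuclideanSpace ℝ (Fin n) → EuclideanSpace ℝ (Fin n))
    (hK : ∀ x ∈ K, ∃ r > (0:ℝ), IsCompact (K ∩ Metric.closedBall x r))
    (hf : ContinuousOn f K) :
    ((∀ x ∈ K, f x ∈ contCone K x) ↔
      (∀ x ∈ K, f x ∈ closure (convexHull ℝ (contCone K x)))) ∧
    ((∀ x ∈ K, f x ∈ contCone K x) ↔
      (∀ x ∈ K, ∀ p ∈ normCone K x, (inner ℝ p (f x) : ℝ) ≤ 0)) := by
  have h12 : (∀ x ∈ K, f x ∈ contCone K x) →
      ∀ x ∈ K, f x ∈ closure (convexHull ℝ (contCone K x)) :=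
    fun h x hx => subset_closure (subset_convexHull ℝ _ (h x hx))
  have h23 : (∀ x ∈ K, f x ∈ closure (convexHull ℝ (contCone K x))) →
      ∀ x ∈ K, ∀ p ∈ normCone K x, ⟪p, f x⟫ ≤ 0 :=
    fun h x hx _ hp => inner_le_zero_of_mem_closure_convexHull hp (h x hx)
  have h31 : (∀ x ∈ K, ∀ p ∈ normCone K x, ⟪p, f x⟫ ≤ 0) → ∀ x ∈ K, f x ∈ contCone K x := by
    intro h x hx
    obtain ⟨r, hr, hKr⟩ := hK x hx
    exact mem_contCone_of_forall_inner_normCone_le_zero hx hr hKr (hf x hx) h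
  exact ⟨⟨h12, h31 ∘ h23⟩, ⟨h23 ∘ h12, h31⟩⟩
end
end

section
/- Let f : ℝⁿ → ℝⁿ be continuous and monotone with constant μ ∈ ℝ. Then any two solutions x₁(·), x₂(·) of x' = f(x) on [0,∞) satisfy ‖x₁(t) − x₂(t)‖ ≤ e^{−μ t}·‖x₁(0) − x₂(0)‖ for all t ≥ 0; in particular, the solution of x' = f(x) starting from any given initial state is unique. -/
open Filter Set Metric Topology
open scoped ENNReal NNReal

noncomputable section

/-- `x` is a solution of `x' = f(x)` on the interval `I`. -/
def SolOn {E : Type*} [NormedAddCommGroup E] [NormedSpace ℝ E]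
    (f : E → E) (x : ℝ → E) (I : Set ℝ) : Prop :=
  ∀ t ∈ I, HasDerivWithinAt x (f (x t)) I t

/-! Gronwall's inequality applied to `‖x₁ - x₂‖²`, whose right derivative
`2⟪f x₁ - f x₂, x₁ - x₂⟫` is at most `-2μ‖x₁ - x₂‖²` by monotonicity. -/

variable {E : Type*} [NormedAddCommGroup E] [InnerProductSpace ℝ E]

theorem norm_le_exp_mul_of_inner_deriv_right_le {u u' : ℝ → E} {μ a b : ℝ}
    (hu : ContinuousOn u (Icc a b))
    (hu' : ∀ t ∈ Ico a b, HasDerivWithinAt u (u' t) (Ici t) t)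
    (bound : ∀ t ∈ Ico a b, inner ℝ (u t) (u' t) ≤ -μ * ‖u t‖ ^ 2) :
    ∀ t ∈ Icc a b, ‖u t‖ ≤ Real.exp (-μ * (t - a)) * ‖u a‖ := by
  intro t ht
  have hsq : ‖u t‖ ^ 2 ≤ ‖u a‖ ^ 2 * Real.exp (-2 * μ * (t - a)) := by
    rw [← gronwallBound_ε0]
    refine le_gronwallBound_of_liminf_deriv_right_le (f := fun s ↦ ‖u s‖ ^ 2)
      (f' := fun s ↦ 2 * inner ℝ (u s) (u' s)) (hu.norm.pow 2)
      (fun s hs _ hr ↦ (hu' s hs).norm_sq.liminf_right_slope_le hr) le_rfl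
      (fun s hs ↦ by linarith [bound s hs]) t ht
  have hexp : ‖u a‖ ^ 2 * Real.exp (-2 * μ * (t - a)) =
      (Real.exp (-μ * (t - a)) * ‖u a‖) ^ 2 := by
    rw [mul_pow, ← Real.exp_nat_mul]
    ring_nf
  rw [hexp] at hsq
  exact (pow_le_pow_iff_left₀ (norm_nonneg _) (by positivity) two_ne_zero).1 hsq

theorem SolOn.norm_sub_le_exp_mul {f : E → E} {μ : ℝ}
    (hmono : ∀ x₁ x₂, inner ℝ (f x₁ - f x₂) (x₁ - x₂) ≤ -μ * ‖x₁ - x₂‖ ^ 2)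
    {x₁ x₂ : ℝ → E} {a : ℝ} (h₁ : SolOn f x₁ (Ici a)) (h₂ : SolOn f x₂ (Ici a))
    {t : ℝ} (ht : a ≤ t) :
    ‖x₁ t - x₂ t‖ ≤ Real.exp (-μ * (t - a)) * ‖x₁ a - x₂ a‖ := by
  have hderiv : ∀ s ∈ Ici a,
      HasDerivWithinAt (fun s ↦ x₁ s - x₂ s) (f (x₁ s) - f (x₂ s)) (Ici a) s :=
    fun s hs ↦ (h₁ s hs).sub (h₂ s hs)
  refine norm_le_exp_mul_of_inner_deriv_right_le (u := fun s ↦ x₁ s - x₂ s)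
    (fun s hs ↦ (hderiv s hs.1).continuousWithinAt.mono Icc_subset_Ici_self)
    (fun s hs ↦ (hderiv s hs.1).mono (Ici_subset_Ici.2 hs.1))
    (fun s _ ↦ ?_) t ⟨ht, le_rfl⟩
  rw [real_inner_comm]
  exact hmono (x₁ s) (x₂ s)

theorem SolOn.eqOn_of_eq {f : E → E} {μ : ℝ}
    (hmono : ∀ x₁ x₂, inner ℝ (f x₁ - f x₂) (x₁ - x₂) ≤ -μ * ‖x₁ - x₂‖ ^ 2)
    {x₁ x₂ : ℝ → E} {a : ℝ} (h₁ : SolOn f x₁ (Ici a)) (h₂ : SolOn f x₂ (Ici a))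
    (h₀ : x₁ a = x₂ a) : EqOn x₁ x₂ (Ici a) := by
  intro t ht
  have := h₁.norm_sub_le_exp_mul hmono h₂ ht
  rw [h₀, sub_self, norm_zero, mul_zero, norm_le_zero_iff, sub_eq_zero] at this
  exact this

theorem monotone_contraction_and_uniqueness_general {n : ℕ}
    (f : EuclideanSpace ℝ (Fin n) → EuclideanSpace ℝ (Fin n)) (μ : ℝ)
    (hmono : ∀ x₁ x₂ : EuclideanSpace ℝ (Fin n),
      (inner ℝ (f x₁ - f x₂) (x₁ - x₂) : ℝ) ≤ -μ * ‖x₁ - x₂‖ ^ 2) :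
    (∀ x₁ x₂ : ℝ → EuclideanSpace ℝ (Fin n),
      SolOn f x₁ (Set.Ici 0) → SolOn f x₂ (Set.Ici 0) →
      ∀ t : ℝ, 0 ≤ t → ‖x₁ t - x₂ t‖ ≤ Real.exp (-μ * t) * ‖x₁ 0 - x₂ 0‖) ∧
    (∀ x₁ x₂ : ℝ → EuclideanSpace ℝ (Fin n),
      SolOn f x₁ (Set.Ici 0) → SolOn f x₂ (Set.Ici 0) → x₁ 0 = x₂ 0 →
      ∀ t : ℝ, 0 ≤ t → x₁ t = x₂ t) :=
  ⟨fun _ _ h₁ h₂ t ht ↦ by simpa using h₁.norm_sub_le_exp_mul hmono h₂ ht,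
    fun _ _ h₁ h₂ h₀ _ ht ↦ h₁.eqOn_of_eq hmono h₂ h₀ ht⟩

/-- Let `f : ℝⁿ → ℝⁿ` be continuous and monotone with constant `μ`, i.e.
`⟨f(x₁) − f(x₂), x₁ − x₂⟩ ≤ −μ‖x₁ − x₂‖²`. Then any two solutions of `x' = f(x)` on
`[0,∞)` satisfy `‖x₁(t) − x₂(t)‖ ≤ e^{−μt}·‖x₁(0) − x₂(0)‖` for all `t ≥ 0`; in
particular, solutions with the same initial state coincide. -/
theorem monotone_contraction_and_uniqueness {n : ℕ}
    (f : EuclideanSpace ℝ (Fin n) → EuclideanSpace ℝ (Fin n)) (μ : ℝ)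
    (hf : Continuous f)
    (hmono : ∀ x₁ x₂ : EuclideanSpace ℝ (Fin n),
      (inner ℝ (f x₁ - f x₂) (x₁ - x₂) : ℝ) ≤ -μ * ‖x₁ - x₂‖ ^ 2) :
    (∀ x₁ x₂ : ℝ → EuclideanSpace ℝ (Fin n),
      SolOn f x₁ (Set.Ici 0) → SolOn f x₂ (Set.Ici 0) →
      ∀ t : ℝ, 0 ≤ t → ‖x₁ t - x₂ t‖ ≤ Real.exp (-μ * t) * ‖x₁ 0 - x₂ 0‖) ∧
    (∀ x₁ x₂ : ℝ → EuclideanSpace ℝ (Fin n),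
      SolOn f x₁ (Set.Ici 0) → SolOn f x₂ (Set.Ici 0) → x₁ 0 = x₂ 0 →
      ∀ t : ℝ, 0 ≤ t → x₁ t = x₂ t) :=
  monotone_contraction_and_uniqueness_general f μ hmono
end
end

section
/- Let f : ℝⁿ → ℝⁿ be continuous with linear growth and C ⊆ ℝⁿ. Then: (i) the viability kernel Viab_f(C) is the largest subset of C viable under f, i.e. Viab_f(C) is itself viable under f and contains every subset of C viable under f; (ii) C \ Viab_f(C) is a repeller under f; (iii) Viab_f(C) \ ∂C is locally backward invariant under f: for every x ∈ Viab_f(C) \ ∂C, every t > 0 and every solution x(·) of x' = f(x) on [0,t] with x(t) = x, there exists s ∈ [0,t) such that x(τ) ∈ Viab_f(C) \ ∂C for all τ ∈ [s,t]. -/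
open Filter Set Metric Topology
open scoped ENNReal NNReal

noncomputable section

/-- `S_f(x₀)`: the set of solutions of `x' = f(x)` on `[0,∞)` starting at `x₀`. -/
def Sols {E : Type*} [NormedAddCommGroup E] [NormedSpace ℝ E] (f : E → E) (x₀ : E) :
    Set (ℝ → E) :=
  {x | x 0 = x₀ ∧ SolOn f x (Set.Ici 0)}

/-- `f` has linear growth. -/
def LinGrowth {E : Type*} [NormedAddCommGroup E] [NormedSpace ℝ E] (f : E → E) : Prop :=
  ∃ c > (0:ℝ), ∀ x, ‖f x‖ ≤ c * (‖x‖ + 1)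

/-- `K` is (globally) viable under `f`. -/
def Viable {E : Type*} [NormedAddCommGroup E] [NormedSpace ℝ E]
    (f : E → E) (K : Set E) : Prop :=
  ∀ x₀ ∈ K, ∃ x ∈ Sols f x₀, ∀ t ∈ Set.Ici (0:ℝ), x t ∈ K

/-- The viability kernel of `K` under `f`. -/
def ViabKer {E : Type*} [NormedAddCommGroup E] [NormedSpace ℝ E]
    (f : E → E) (K : Set E) : Set E :=
  {x₀ ∈ K | ∃ x ∈ Sols f x₀, ∀ t ∈ Set.Ici (0:ℝ), x t ∈ K}

/-! The viability kernel is viable because a tail of a viable solution is again a viable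
solution. For local backward invariance, a solution arriving at a point `x₀` of the kernel that
lies in the interior of `C` stays in `C` for a short time before arriving; concatenating that
final piece with a viable solution starting at `x₀` shows that every point of the piece lies in
the kernel, and none of them lies on `∂C`. -/

theorem exists_Icc_subset_preimage_of_continuousWithinAt {X : Type*} [TopologicalSpace X]
    {x : ℝ → X} {a b : ℝ} (hab : a < b) (hx : ContinuousWithinAt x (Icc a b) b)
    {U : Set X} (hU : U ∈ 𝓝 (x b)) : ∃ s ∈ Ico a b, Icc s b ⊆ x ⁻¹' U := by
  have hleft : x ⁻¹' U ∈ 𝓝[≤] b := nhdsWithin_Icc_eq_nhdsLE hab ▸ hx hU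
  obtain ⟨l, hlb, hl⟩ := mem_nhdsLE_iff_exists_Icc_subset.1 hleft
  exact ⟨max a l, ⟨le_max_left _ _, max_lt hab hlb⟩,
    (Icc_subset_Icc_left (le_max_right _ _)).trans hl⟩

section

variable {E : Type*} [NormedAddCommGroup E] [NormedSpace ℝ E] {f : E → E} {x z : ℝ → E}
  {I J : Set ℝ}

namespace SolOn

theorem mono (hx : SolOn f x I) (hJI : J ⊆ I) : SolOn f x J :=
  fun t ht => (hx t (hJI ht)).mono hJI

theorem congr (hx : SolOn f x I) (hzx : EqOn z x I) : SolOn f z I := fun t ht => by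
  rw [hzx ht]
  exact (hx t ht).congr hzx (hzx ht)

theorem comp_add_const (hx : SolOn f x I) (a : ℝ) :
    SolOn f (fun s => x (s + a)) ((· + a) ⁻¹' I) := fun s hs => by
  have h := (hx (s + a) hs).scomp s ((hasDerivAt_id s).add_const a).hasDerivWithinAt fun _ h => h
  rwa [one_smul] at h

/-- Off a closed domain the derivative condition holds vacuously. -/
theorem hasDerivWithinAt_of_isClosed (hx : SolOn f x I) (hI : IsClosed I) (t : ℝ) :
    HasDerivWithinAt x (f (x t)) I t := by
  by_cases ht : t ∈ I
  · exact hx t ht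
  · exact HasFDerivWithinAt.of_notMem_closure (hI.closure_eq.symm ▸ ht)

theorem union (hI : SolOn f x I) (hJ : SolOn f x J) (hIc : IsClosed I) (hJc : IsClosed J) :
    SolOn f x (I ∪ J) := fun t _ =>
  (hI.hasDerivWithinAt_of_isClosed hIc t).union (hJ.hasDerivWithinAt_of_isClosed hJc t)

theorem piecewise_Icc_Ici {a b : ℝ} (hab : a ≤ b) (hx : SolOn f x (Icc a b))
    (hz : SolOn f z (Ici b)) (hxz : x b = z b) :
    SolOn f (fun σ => if σ ≤ b then x σ else z σ) (Ici a) := by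
  have hleft : EqOn (fun σ => if σ ≤ b then x σ else z σ) x (Icc a b) :=
    fun σ hσ => if_pos hσ.2
  have hright : EqOn (fun σ => if σ ≤ b then x σ else z σ) z (Ici b) := by
    intro σ (hσ : b ≤ σ)
    rcases hσ.eq_or_lt with rfl | hbσ
    · simpa using hxz
    · exact if_neg hbσ.not_ge
  rw [← Icc_union_Ici_eq_Ici hab]
  exact (hx.congr hleft).union (hz.congr hright) isClosed_Icc isClosed_Ici

end SolOn

theorem comp_add_const_mem_sols {x₀ : E} (hx : x ∈ Sols f x₀) {t : ℝ} (ht : 0 ≤ t) :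
    (fun s => x (s + t)) ∈ Sols f (x t) :=
  ⟨by simp, (hx.2.comp_add_const t).mono fun s (hs : 0 ≤ s) =>
    show 0 ≤ s + t by linarith⟩

variable {K : Set E}

theorem viable_viabKer : Viable f (ViabKer f K) := by
  rintro x₀ ⟨-, x, hx, hxK⟩
  refine ⟨x, hx, fun t ht => ⟨hxK t ht, _, comp_add_const_mem_sols hx ht, fun s hs => ?_⟩⟩
  exact hxK (s + t) (mem_Ici.2 (add_nonneg hs ht))

theorem subset_viabKer_of_viable {A : Set E} (hAK : A ⊆ K) (hA : Viable f A) :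
    A ⊆ ViabKer f K := fun x₀ hx₀ =>
  let ⟨x, hx, hxA⟩ := hA x₀ hx₀
  ⟨hAK hx₀, x, hx, fun t ht => hAK (hxA t ht)⟩

theorem mem_viabKer_of_solOn_Icc {a b : ℝ} (hab : a ≤ b) (hx : SolOn f x (Icc a b))
    (hxK : ∀ τ ∈ Icc a b, x τ ∈ K) (hb : x b ∈ ViabKer f K) : x a ∈ ViabKer f K := by
  obtain ⟨-, z, ⟨hz0, hz⟩, hzK⟩ := hb
  have hz' : SolOn f (fun σ => z (σ + -b)) (Ici b) :=
    (hz.comp_add_const (-b)).mono fun σ (hσ : b ≤ σ) => show 0 ≤ σ + -b by linarith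
  have hy := SolOn.piecewise_Icc_Ici hab hx hz' (by simp [hz0])
  refine ⟨hxK a ⟨le_rfl, hab⟩, _,
    ⟨by simp [hab], (hy.comp_add_const a).mono fun s (hs : 0 ≤ s) =>
      show a ≤ s + a by linarith⟩, fun s (hs : 0 ≤ s) => ?_⟩
  split_ifs with hsb
  · exact hxK _ ⟨by linarith, hsb⟩
  · exact hzK _ (show 0 ≤ s + a + -b by linarith)

end

theorem viability_kernel_properties_general {n : ℕ}
    (f : EuclideanSpace ℝ (Fin n) → EuclideanSpace ℝ (Fin n))
    (C : Set (EuclideanSpace ℝ (Fin n))) :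
    -- (i): the kernel is viable under `f` and contains every subset of `C` viable under `f`
    (Viable f (ViabKer f C) ∧
      ∀ A : Set (EuclideanSpace ℝ (Fin n)), A ⊆ C → Viable f A → A ⊆ ViabKer f C) ∧
    -- (ii): `C \ Viab_f(C)` is a repeller
    (∀ x₀ ∈ C \ ViabKer f C, ∀ x ∈ Sols f x₀,
      ¬ (∀ t ∈ Set.Ici (0:ℝ), x t ∈ C \ ViabKer f C)) ∧
    -- (iii): `Viab_f(C) \ ∂C` is locally backward invariant
    (∀ x₀ ∈ ViabKer f C \ frontier C, ∀ t : ℝ, 0 < t →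
      ∀ x : ℝ → EuclideanSpace ℝ (Fin n), SolOn f x (Set.Icc 0 t) → x t = x₀ →
        ∃ s ∈ Set.Ico (0:ℝ) t, ∀ τ ∈ Set.Icc s t, x τ ∈ ViabKer f C \ frontier C) := by
  refine ⟨⟨viable_viabKer, fun A => subset_viabKer_of_viable⟩, ?_, ?_⟩
  · rintro x₀ ⟨hx₀C, hx₀⟩ x hx hxC
    exact hx₀ ⟨hx₀C, x, hx, fun t ht => (hxC t ht).1⟩
  · rintro _ ⟨hker, hfr⟩ t ht x hx rfl
    have hint : x t ∈ interior C := self_sdiff_frontier C ▸ ⟨hker.1, hfr⟩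
    obtain ⟨s, hs, hsint⟩ := exists_Icc_subset_preimage_of_continuousWithinAt ht
      (hx t ⟨ht.le, le_rfl⟩).continuousWithinAt (isOpen_interior.mem_nhds hint)
    refine ⟨s, hs, fun τ hτ => ⟨?_, fun hτfr => hτfr.2 (hsint hτ)⟩⟩
    exact mem_viabKer_of_solOn_Icc hτ.2 (hx.mono (Icc_subset_Icc (hs.1.trans hτ.1) le_rfl))
      (fun σ hσ => interior_subset (hsint ⟨hτ.1.trans hσ.1, hσ.2⟩)) hker

/-- Let `f : ℝⁿ → ℝⁿ` be continuous with linear growth and `C ⊆ ℝⁿ`. Then: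
(i) the viability kernel `Viab_f(C)` is the largest subset of `C` viable under `f`;
(ii) `C \ Viab_f(C)` is a repeller under `f`;
(iii) `Viab_f(C) \ ∂C` is locally backward invariant under `f`. -/
theorem viability_kernel_properties {n : ℕ}
    (f : EuclideanSpace ℝ (Fin n) → EuclideanSpace ℝ (Fin n))
    (hf : Continuous f) (hgrowth : LinGrowth f)
    (C : Set (EuclideanSpace ℝ (Fin n))) :
    -- (i): the kernel is viable under `f` and contains every subset of `C` viable under `f`
    (Viable f (ViabKer f C) ∧
      ∀ A : Set (EuclideanSpace ℝ (Fin n)), A ⊆ C → Viable f A → A ⊆ ViabKer f C) ∧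
    -- (ii): `C \ Viab_f(C)` is a repeller
    (∀ x₀ ∈ C \ ViabKer f C, ∀ x ∈ Sols f x₀,
      ¬ (∀ t ∈ Set.Ici (0:ℝ), x t ∈ C \ ViabKer f C)) ∧
    -- (iii): `Viab_f(C) \ ∂C` is locally backward invariant
    (∀ x₀ ∈ ViabKer f C \ frontier C, ∀ t : ℝ, 0 < t →
      ∀ x : ℝ → EuclideanSpace ℝ (Fin n), SolOn f x (Set.Icc 0 t) → x t = x₀ →
        ∃ s ∈ Set.Ico (0:ℝ) t, ∀ τ ∈ Set.Icc s t, x τ ∈ ViabKer f C \ frontier C) :=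
  viability_kernel_properties_general f C
end
end

section
/- Let u : ℝⁿ → ℝ ∪ {+∞} be a nontrivial extended function and let x ∈ Dom(u). Then the epigraph {(v, λ) ∈ ℝⁿ × ℝ : D↑u(x)(v) ≤ λ} of the contingent epiderivative of u at x equals the contingent cone T_{Ep(u)}(x, u(x)) to the epigraph of u at the point (x, u(x)). -/
open Filter Set Metric Topology
open scoped ENNReal NNReal

noncomputable section

/-- The epigraph of an extended function `u : E → ℝ ∪ {±∞}`:
`Ep(u) = {(x, λ) ∈ E × ℝ : u(x) ≤ λ}`. -/
def epiSet {E : Type*} (u : E → EReal) : Set (E × ℝ) :=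
  {p | u p.1 ≤ (p.2 : EReal)}

/-- The contingent epiderivative
`D↑u(x)(v) = liminf_{h→0+, v'→v} (u(x + h·v') − u(x))/h`, with values in `[−∞, +∞]`. -/
def epiDeriv {E : Type*} [NormedAddCommGroup E] [NormedSpace ℝ E]
    (u : E → EReal) (x : E) (v : E) : EReal :=
  Filter.liminf (fun q : ℝ × E => ((q.1⁻¹ : ℝ) : EReal) * (u (x + q.1 • q.2) - u x))
    ((nhdsWithin (0:ℝ) (Set.Ioi 0)) ×ˢ nhds v)
/-!
For `h > 0` the affine map `p ↦ (x, u x) + h • p` maps the epigraph of the difference quotient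
`v ↦ (u (x + h • v) - u x) / h` onto `Ep(u)` and multiplies distances by `h`. Hence the
quotient `dist((x, u x) + h • (v, λ), Ep(u)) / h` defining the contingent cone is the distance
from `(v, λ)` to the epigraph of the difference quotient, and both sides of the theorem become
statements about one family of epigraphs indexed by `h → 0+`: the lower limit of the functions
at `v` is at most `λ` exactly when `(v, λ)` is approached by points of their epigraphs.
-/

theorem EReal.coe_inv_mul_sub_coe_le_coe_iff {h : ℝ} (hh : 0 < h) (t : EReal) (a c : ℝ) :
    ((h⁻¹ : ℝ) : EReal) * (t - a) ≤ c ↔ t ≤ ((a + h * c : ℝ) : EReal) := by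
  induction t using EReal.rec with
  | bot => simp [EReal.coe_mul_bot_of_pos (inv_pos.2 hh)]
  | top => simp only [EReal.top_sub_coe, EReal.coe_mul_top_of_pos (inv_pos.2 hh), top_le_iff,
      EReal.coe_ne_top]
  | coe t =>
    rw [← EReal.coe_sub, ← EReal.coe_mul, EReal.coe_le_coe_iff, EReal.coe_le_coe_iff,
      inv_mul_le_iff₀ hh]
    constructor <;> intro <;> linarith

open Pointwise in
theorem infDist_add_smul_eq_mul_infDist_preimage {𝕜 F : Type*} [NormedField 𝕜]
    [NormedAddCommGroup F] [NormedSpace 𝕜 F] {h : 𝕜} (hh : h ≠ 0) (z w : F) (S : Set F) :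
    infDist (z + h • w) S = ‖h‖ * infDist w ((fun p => z + h • p) ⁻¹' S) := by
  set T := (fun p => z + h • p) ⁻¹' S
  have hsurj : Function.Surjective fun p : F => z + h • p := fun y =>
    ⟨h⁻¹ • (y - z), by simp [smul_smul, hh]⟩
  calc infDist (z + h • w) S = infDist (z + h • w) ((z + ·) '' (h • T)) := by
        rw [← image_smul, image_image, image_preimage_eq S hsurj]
    _ = infDist (h • w) (h • T) := infDist_image (isometry_add_left z)
    _ = ‖h‖ * infDist w T := infDist_smul₀ hh T w

theorem liminf_le_coe_iff_frequently_lt {α : Type*} {l : Filter α} {f : α → EReal} {c : ℝ} :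
    liminf f l ≤ c ↔ ∀ ε > (0 : ℝ), ∃ᶠ a in l, f a < ((c + ε : ℝ) : EReal) := by
  rw [liminf_le_iff]
  refine ⟨fun H ε hε => H _ (EReal.coe_lt_coe_iff.2 (lt_add_of_pos_right c hε)),
    fun H y hy => ?_⟩
  obtain ⟨r, hcr, hry⟩ := EReal.lt_iff_exists_real_btwn.1 hy
  have hcr : c < r := by exact_mod_cast hcr
  exact (H (r - c) (sub_pos.2 hcr)).mono fun a ha =>
    (ha.trans_eq (by rw [add_sub_cancel])).trans hry

theorem liminf_ofReal_eq_zero_iff_frequently_lt {α : Type*} {l : Filter α} {g : α → ℝ} :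
    liminf (fun a => ENNReal.ofReal (g a)) l = 0 ↔
      ∀ ε > (0 : ℝ), ∃ᶠ a in l, g a < ε := by
  rw [← nonpos_iff_eq_zero, liminf_le_iff]
  refine ⟨fun H ε hε => (H _ (ENNReal.ofReal_pos.2 hε)).mono fun a ha =>
    (ENNReal.ofReal_lt_ofReal_iff hε).1 ha, fun H y hy => ?_⟩
  obtain ⟨r, -, hr0, hry⟩ := ENNReal.lt_iff_exists_real_btwn.1 hy
  have hr0 := ENNReal.ofReal_pos.1 hr0
  exact (H r hr0).mono fun a ha => ((ENNReal.ofReal_lt_ofReal_iff hr0).2 ha).trans hry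

section EpigraphDistance

variable {E : Type*} [PseudoMetricSpace E] {f : E → EReal} {v v' : E} {c ε : ℝ}

theorem infDist_epiSet_le_of_lt (hfv' : f v' < ((c + ε : ℝ) : EReal)) (hv' : dist v' v ≤ ε) :
    infDist (v, c) (epiSet f) ≤ ε := by
  have hmem : (v', c + ε) ∈ epiSet f := hfv'.le
  refine (infDist_le_dist_of_mem hmem).trans ?_
  rw [Prod.dist_eq, dist_comm v, Real.dist_eq, sub_add_cancel_left, abs_neg]
  exact max_le hv' (abs_of_nonneg (dist_nonneg.trans hv')).le

theorem exists_lt_of_infDist_epiSet_lt (hf : (epiSet f).Nonempty)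
    (h : infDist (v, c) (epiSet f) < ε) :
    ∃ v', dist v' v < ε ∧ f v' < ((c + ε : ℝ) : EReal) := by
  obtain ⟨⟨v', μ⟩, hmem, hdist⟩ := (infDist_lt_iff hf).1 h
  rw [Prod.dist_eq, max_lt_iff, dist_comm v, Real.dist_eq, abs_lt] at hdist
  exact ⟨v', hdist.1, lt_of_le_of_lt hmem (EReal.coe_lt_coe_iff.2 (by linarith [hdist.2.1]))⟩

end EpigraphDistance

theorem liminf_prod_nhds_le_coe_iff_liminf_infDist_epiSet_eq_zero {ι E : Type*}
    [PseudoMetricSpace E] {l : Filter ι} {f : ι → E → EReal}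
    (hf : ∀ i, (epiSet (f i)).Nonempty) (v : E) (c : ℝ) :
    liminf (fun q : ι × E => f q.1 q.2) (l ×ˢ 𝓝 v) ≤ c ↔
      liminf (fun i => ENNReal.ofReal (infDist (v, c) (epiSet (f i)))) l = 0 := by
  rw [liminf_le_coe_iff_frequently_lt, liminf_ofReal_eq_zero_iff_frequently_lt]
  constructor
  · intro H ε hε
    have hnear : ∀ᶠ q : ι × E in l ×ˢ 𝓝 v, dist q.2 v < ε / 2 :=
      tendsto_snd.eventually (ball_mem_nhds v (half_pos hε))
    refine tendsto_fst.frequently (((H _ (half_pos hε)).and_eventually hnear).mono fun q hq => ?_)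
    exact (infDist_epiSet_le_of_lt hq.1 hq.2.le).trans_lt (half_lt_self hε)
  · intro H ε hε
    rw [frequently_iff]
    intro S hS
    obtain ⟨T, hT, V, hV, hTV⟩ := mem_prod_iff.1 hS
    obtain ⟨δ, hδ, hδV⟩ := Metric.mem_nhds_iff.1 hV
    obtain ⟨i, hi, hiT⟩ := ((H (min δ ε) (lt_min hδ hε)).and_eventually hT).exists
    obtain ⟨v', hv', hfv'⟩ := exists_lt_of_infDist_epiSet_lt (hf i) hi
    refine ⟨(i, v'), hTV ⟨hiT, hδV (hv'.trans_le (min_le_left _ _))⟩, hfv'.trans_le ?_⟩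
    exact EReal.coe_le_coe_iff.2 (add_le_add_right (min_le_right δ ε) c)

section DifferenceQuotient

variable {E : Type*} [NormedAddCommGroup E] [NormedSpace ℝ E] {u : E → EReal} {x : E}
  {a h : ℝ}

def diffQuot (u : E → EReal) (x : E) (h : ℝ) (v : E) : EReal :=
  ((h⁻¹ : ℝ) : EReal) * (u (x + h • v) - u x)

theorem zero_mem_epiSet_diffQuot (hux : u x = a) : (0, 0) ∈ epiSet (diffQuot u x h) := by
  simp [epiSet, diffQuot, hux]

theorem epiSet_diffQuot (hh : 0 < h) (hux : u x = a) :
    epiSet (diffQuot u x h) = (fun p => (x, a) + h • p) ⁻¹' epiSet u := by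
  ext p
  simp only [epiSet, diffQuot, mem_ofPred_eq, mem_preimage, Prod.fst_add, Prod.snd_add,
    Prod.smul_fst, Prod.smul_snd, smul_eq_mul, hux]
  exact EReal.coe_inv_mul_sub_coe_le_coe_iff hh _ _ _

theorem infDist_add_smul_epiSet_div (hh : 0 < h) (hux : u x = a) (w : E × ℝ) :
    infDist ((x, a) + h • w) (epiSet u) / h = infDist w (epiSet (diffQuot u x h)) := by
  rw [infDist_add_smul_eq_mul_infDist_preimage hh.ne', ← epiSet_diffQuot hh hux,
    Real.norm_of_nonneg hh.le, mul_div_cancel_left₀ _ hh.ne']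

end DifferenceQuotient

theorem epiDeriv_epigraph_eq_contCone_general {n : ℕ}
    (u : EuclideanSpace ℝ (Fin n) → EReal)
    (hbot : ∀ y, u y ≠ ⊥)
    (x : EuclideanSpace ℝ (Fin n)) (hx : u x ≠ ⊤) :
    {p : (EuclideanSpace ℝ (Fin n)) × ℝ | epiDeriv u x p.1 ≤ (p.2 : EReal)}
      = contCone (epiSet u) (x, (u x).toReal) := by
  set a := (u x).toReal
  have hux : u x = a := (EReal.coe_toReal hx (hbot x)).symm
  ext ⟨v, c⟩
  have hrescale : ∀ᶠ h in 𝓝[>] (0 : ℝ),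
      ENNReal.ofReal (infDist ((x, a) + h • (v, c)) (epiSet u) / h) =
        ENNReal.ofReal (infDist (v, c) (epiSet (diffQuot u x h))) :=
    eventually_mem_nhdsWithin.mono fun h hh => by rw [infDist_add_smul_epiSet_div hh hux]
  rw [contCone, mem_ofPred_eq, mem_ofPred_eq, liminf_congr hrescale]
  exact liminf_prod_nhds_le_coe_iff_liminf_infDist_epiSet_eq_zero (f := diffQuot u x)
    (fun h => ⟨0, zero_mem_epiSet_diffQuot hux⟩) v c

/-- Let `u : ℝⁿ → ℝ ∪ {+∞}` be a nontrivial extended function and `x ∈ Dom(u)`. Then the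
epigraph of the contingent epiderivative `D↑u(x)` equals the contingent cone to the
epigraph of `u` at `(x, u(x))`. -/
theorem epiDeriv_epigraph_eq_contCone {n : ℕ}
    (u : EuclideanSpace ℝ (Fin n) → EReal)
    (hbot : ∀ y, u y ≠ ⊥) (hnontriv : ∃ y, u y ≠ ⊤)
    (x : EuclideanSpace ℝ (Fin n)) (hx : u x ≠ ⊤) :
    {p : (EuclideanSpace ℝ (Fin n)) × ℝ | epiDeriv u x p.1 ≤ (p.2 : EReal)}
      = contCone (epiSet u) (x, (u x).toReal) :=
  epiDeriv_epigraph_eq_contCone_general u hbot x hx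
end
end
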